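/- arXiv:2410.20760 — 3 statements merged into one kernel-verified Lean document; each statement's English description precedes it below -/
import Mathlib

section
/- Suppose 𝒰 satisfies Assumption (A), σ satisfies Assumption (B), and λ is a decay rate of σ with constant C₀ > 0. Let μ be a Borel measure on X and let P, Q be Borel probability measures absolutely continuous with respect to μ with μ-a.e. strictly positive densities p, q. Suppose there exist u ∈ 𝒰 and β ∈ ℝ such that log(p(x)/q(x)) = u(x) + β for μ-almost every x. Then for every c > C₀, 0 ≤ TV(P,Q) − STV_{c𝒰,σ}(P,Q) ≤ λ(c)·(1 − TV(P,Q)), where c𝒰 := {c·u : u ∈ 𝒰}. -/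
open MeasureTheory Filter
open scoped ENNReal NNReal

noncomputable def TV {X : Type*} [MeasurableSpace X] (P Q : Measure X) : ℝ :=
  ⨆ A : {A : Set X // MeasurableSet A}, |(P A.1).toReal - (Q A.1).toReal|

noncomputable def STV {X : Type*} [MeasurableSpace X] (𝒰 : Set (X → ℝ)) (σ : ℝ → ℝ)
    (P Q : Measure X) : ℝ :=
  ⨆ ub : 𝒰 × ℝ, |∫ x, σ (ub.1.1 x - ub.2) ∂P - ∫ x, σ (ub.1.1 x - ub.2) ∂Q|

noncomputable def stepFun : ℝ → ℝ := fun x => if 0 ≤ x then 1 else 0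

noncomputable def sigmoid : ℝ → ℝ := fun z => 1 / (1 + Real.exp (-z))

def AssumptionB (σ : ℝ → ℝ) : Prop :=
  Continuous σ ∧ StrictMono σ ∧ Tendsto σ atBot (nhds 0) ∧ Tendsto σ atTop (nhds 1) ∧
    ∀ z, σ z + σ (-z) = 1

def DecayRate (σ : ℝ → ℝ) (C₀ : ℝ) (lam : ℝ → ℝ) : Prop :=
  Tendsto lam atTop (nhds 0) ∧ ∀ c, C₀ < c → ∀ t, 1 ≤ t → σ (-(c * Real.log t)) * (t - 1) ≤ lam c

noncomputable def evalH {X H : Type*} [NormedAddCommGroup H] [InnerProductSpace ℝ H]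
    (φ : X → H) (f : H) : X → ℝ := fun x => (inner ℝ f (φ x) : ℝ)

noncomputable def ballFuns {X H : Type*} [NormedAddCommGroup H] [InnerProductSpace ℝ H]
    (φ : X → H) (U : ℝ) : Set (X → ℝ) := evalH φ '' {h : H | ‖h‖ ≤ U}

noncomputable def logPartition {X H : Type*} [MeasurableSpace X] [NormedAddCommGroup H]
    [InnerProductSpace ℝ H] (μ : Measure X) (φ : X → H) (f : H) : ℝ :=
  Real.log (∫ x, Real.exp (evalH φ f x) ∂μ)

noncomputable def Pexp {X H : Type*} [MeasurableSpace X] [NormedAddCommGroup H]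
    [InnerProductSpace ℝ H] (μ : Measure X) (φ : X → H) (f : H) : Measure X :=
  μ.withDensity fun x => ENNReal.ofReal (Real.exp (evalH φ f x - logPartition μ φ f))

noncomputable def empMeasure {X : Type*} [MeasurableSpace X] {n : ℕ} (xs : Fin n → X) : Measure X :=
  (n : ℝ≥0∞)⁻¹ • ∑ i, Measure.dirac (xs i)

noncomputable def STVb {X : Type*} [MeasurableSpace X] (𝒰 : Set (X → ℝ)) (σ : ℝ → ℝ) (U : ℝ)
    (P Q : Measure X) : ℝ :=
  ⨆ ub : 𝒰 × {b : ℝ // |b| ≤ U}, |∫ x, σ (ub.1.1 x - ub.2.1) ∂P - ∫ x, σ (ub.1.1 x - ub.2.1) ∂Q|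

/-! With densities `p, q`, `TV(P, Q) = ∫ (p - q)⁺ dμ`, attained on `{q ≤ p}`, and every test
function `f` with values in `[0, 1]` satisfies `|∫ f dP - ∫ f dQ| = |∫ (p - q) f dμ| ≤ ∫ (p - q)⁺ dμ`;
this gives `STV ≤ TV`. Conversely, `c log (p / q) = c u + c β` a.e., so `σ (c log (p / q))` is an
admissible test function. By `σ z + σ (-z) = 1`, pointwise
`(p - q)⁺ - (p - q) σ (c log (p / q)) = min(p, q) (t - 1) σ (-c log t)` with
`t = max(p, q) / min(p, q) ≥ 1`, which the decay rate bounds by `λ(c) min(p, q)`; finally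
`∫ min(p, q) dμ = 1 - TV(P, Q)`. -/

open Set

namespace AssumptionB

variable {σ : ℝ → ℝ}

theorem mem_Icc (hB : AssumptionB σ) (z : ℝ) : σ z ∈ Icc 0 1 :=
  ⟨hB.2.1.monotone.le_of_tendsto hB.2.2.1 z, hB.2.1.monotone.ge_of_tendsto hB.2.2.2.1 z⟩

theorem measurable (hB : AssumptionB σ) : Measurable σ :=
  hB.1.measurable

end AssumptionB

namespace DecayRate

variable {σ : ℝ → ℝ} {C₀ c : ℝ} {lam : ℝ → ℝ}

theorem sub_mul_le (hlam : DecayRate σ C₀ lam) (hc : C₀ < c) {a b : ℝ} (hb : 0 < b)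
    (hba : b ≤ a) : (a - b) * σ (-(c * Real.log (a / b))) ≤ lam c * b := by
  have hdecay := hlam.2 c hc (a / b) ((one_le_div hb).2 hba)
  calc (a - b) * σ (-(c * Real.log (a / b)))
      = b * (σ (-(c * Real.log (a / b))) * (a / b - 1)) := by field_simp
    _ ≤ b * lam c := mul_le_mul_of_nonneg_left hdecay hb.le
    _ = lam c * b := mul_comm _ _

theorem max_sub_sub_mul_le_mul_min (hB : AssumptionB σ) (hlam : DecayRate σ C₀ lam)
    (hc : C₀ < c) {a b : ℝ} (ha : 0 < a) (hb : 0 < b) :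
    max (a - b) 0 - (a - b) * σ (c * Real.log (a / b)) ≤ lam c * min a b := by
  rcases le_total b a with hba | hab
  · have hsymm := hB.2.2.2.2 (c * Real.log (a / b))
    have := hlam.sub_mul_le hc hb hba
    rw [max_eq_left (sub_nonneg.2 hba), min_eq_right hba]
    linear_combination this + (b - a) * hsymm
  · have := hlam.sub_mul_le hc ha hab
    rw [← inv_div b a, Real.log_inv, mul_neg, max_eq_right (sub_nonpos.2 hab),
      min_eq_left hab]
    linarith

end DecayRate

section Density

variable {X : Type*} [MeasurableSpace X] {μ : Measure X} {p q : X → ℝ}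

theorem integral_withDensity_ofReal (hp : AEMeasurable p μ) (hp0 : 0 ≤ᵐ[μ] p) (f : X → ℝ) :
    ∫ x, f x ∂μ.withDensity (fun x => ENNReal.ofReal (p x)) = ∫ x, p x * f x ∂μ := by
  rw [integral_withDensity_eq_integral_toReal_smul₀ hp.ennreal_ofReal
    (ae_of_all _ fun _ => ENNReal.ofReal_lt_top)]
  refine integral_congr_ae (hp0.mono fun x hx => ?_)
  simp [ENNReal.toReal_ofReal hx]

theorem integral_mul_le_integral_max {g f : X → ℝ} (hg : Integrable g μ)
    (hf : AEStronglyMeasurable f μ) (hf01 : ∀ x, f x ∈ Icc 0 1) :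
    ∫ x, g x * f x ∂μ ≤ ∫ x, max (g x) 0 ∂μ := by
  refine integral_mono (hg.mul_bdd hf (c := 1) (ae_of_all _ fun x => ?_)) hg.pos_part fun x => ?_
  · obtain ⟨h0, h1⟩ := hf01 x
    rwa [Real.norm_eq_abs, abs_of_nonneg h0]
  · obtain ⟨h0, h1⟩ := hf01 x
    rcases le_total 0 (g x) with hg0 | hg0
    · exact (mul_le_of_le_one_right hg0 h1).trans (le_max_left _ _)
    · exact (mul_nonpos_of_nonpos_of_nonneg hg0 h0).trans (le_max_right _ _)

theorem abs_integral_mul_le_integral_max {g f : X → ℝ} (hg : Integrable g μ)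
    (hg0 : ∫ x, g x ∂μ = 0) (hf : AEStronglyMeasurable f μ) (hf01 : ∀ x, f x ∈ Icc 0 1) :
    |∫ x, g x * f x ∂μ| ≤ ∫ x, max (g x) 0 ∂μ := by
  have hneg : ∫ x, max (-g x) 0 ∂μ = ∫ x, max (g x) 0 ∂μ - ∫ x, g x ∂μ := by
    rw [← integral_sub hg.pos_part hg]
    congr 1 with x
    rcases le_total 0 (g x) with h | h
    · rw [max_eq_right (neg_nonpos.2 h), max_eq_left h, sub_self]
    · rw [max_eq_left (neg_nonneg.2 h), max_eq_right h, zero_sub]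
  have hle := integral_mul_le_integral_max (g := fun x => -g x) hg.neg hf hf01
  simp only [neg_mul, integral_neg] at hle
  rw [abs_le]
  exact ⟨by linarith, integral_mul_le_integral_max hg hf hf01⟩

theorem integral_sub_integral_withDensity_ofReal (hp : Integrable p μ) (hp0 : 0 ≤ᵐ[μ] p)
    (hq : Integrable q μ) (hq0 : 0 ≤ᵐ[μ] q) {f : X → ℝ} (hf : AEStronglyMeasurable f μ) {C : ℝ}
    (hfC : ∀ᵐ x ∂μ, ‖f x‖ ≤ C) :
    ∫ x, f x ∂μ.withDensity (fun x => ENNReal.ofReal (p x)) -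
        ∫ x, f x ∂μ.withDensity (fun x => ENNReal.ofReal (q x)) =
      ∫ x, (p x - q x) * f x ∂μ := by
  rw [integral_withDensity_ofReal hp.aemeasurable hp0,
    integral_withDensity_ofReal hq.aemeasurable hq0,
    ← integral_sub (hp.mul_bdd hf hfC) (hq.mul_bdd hf hfC)]
  simp_rw [sub_mul]

structure IsProbDensity (μ : Measure X) (p : X → ℝ) : Prop where
  measurable : Measurable p
  nonneg : 0 ≤ᵐ[μ] p
  integrable : Integrable p μ
  integral_eq_one : ∫ x, p x ∂μ = 1

theorem IsProbDensity.of_withDensity (hp : Measurable p) (hp0 : 0 ≤ᵐ[μ] p)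
    [IsProbabilityMeasure (μ.withDensity fun x => ENNReal.ofReal (p x))] : IsProbDensity μ p where
  measurable := hp
  nonneg := hp0
  integrable := by
    refine ⟨hp.aestronglyMeasurable, (hasFiniteIntegral_iff_ofReal hp0).2 ?_⟩
    rw [← Measure.restrict_univ (μ := μ), ← withDensity_apply _ MeasurableSet.univ, measure_univ]
    exact ENNReal.one_lt_top
  integral_eq_one := by
    simpa using (integral_withDensity_ofReal hp.aemeasurable hp0 fun _ => 1).symm

namespace IsProbDensity

theorem TV_withDensity (hp : IsProbDensity μ p) (hq : IsProbDensity μ q) :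
    TV (μ.withDensity fun x => ENNReal.ofReal (p x))
        (μ.withDensity fun x => ENNReal.ofReal (q x)) = ∫ x, max (p x - q x) 0 ∂μ := by
  have hdiff : ∀ B : {B : Set X // MeasurableSet B},
      ((μ.withDensity fun x => ENNReal.ofReal (p x)) B).toReal -
          ((μ.withDensity fun x => ENNReal.ofReal (q x)) B).toReal =
        ∫ x, (p x - q x) * B.1.indicator 1 x ∂μ := by
    intro B
    rw [← integral_sub_integral_withDensity_ofReal hp.integrable hp.nonneg hq.integrable hq.nonneg
      (f := B.1.indicator 1) (stronglyMeasurable_const.indicator B.2).aestronglyMeasurable (C := 1)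
      (ae_of_all _ fun x => by by_cases hx : x ∈ B.1 <;> simp [hx]),
      integral_indicator_one B.2, integral_indicator_one B.2]
    rfl
  have hbound : ∀ B : {B : Set X // MeasurableSet B},
      |((μ.withDensity fun x => ENNReal.ofReal (p x)) B).toReal -
          ((μ.withDensity fun x => ENNReal.ofReal (q x)) B).toReal| ≤
        ∫ x, max (p x - q x) 0 ∂μ := by
    intro B
    rw [hdiff]
    refine abs_integral_mul_le_integral_max (hp.integrable.sub hq.integrable) ?_
      (stronglyMeasurable_const.indicator B.2).aestronglyMeasurable fun x => ?_
    · rw [integral_sub hp.integrable hq.integrable, hp.integral_eq_one, hq.integral_eq_one,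
        sub_self]
    · by_cases hx : x ∈ B.1 <;> simp [hx]
  have : Nonempty {B : Set X // MeasurableSet B} := ⟨⟨∅, .empty⟩⟩
  refine le_antisymm (ciSup_le hbound) ?_
  let A : {B : Set X // MeasurableSet B} :=
    ⟨{x | q x ≤ p x}, measurableSet_le hq.measurable hp.measurable⟩
  have hA : ∫ x, max (p x - q x) 0 ∂μ = ∫ x, (p x - q x) * A.1.indicator 1 x ∂μ := by
    congr 1 with x
    by_cases hx : q x ≤ p x
    · simp [A, hx]
    · simp [A, hx, (sub_neg.2 (not_le.1 hx)).le]
  rw [hA, ← hdiff]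
  exact (le_abs_self _).trans (le_ciSup ⟨_, forall_mem_range.2 hbound⟩ A)

theorem abs_integral_sub_le_TV (hp : IsProbDensity μ p) (hq : IsProbDensity μ q) {f : X → ℝ}
    (hf : Measurable f) (hf01 : ∀ x, f x ∈ Icc 0 1) :
    |∫ x, f x ∂μ.withDensity (fun x => ENNReal.ofReal (p x)) -
        ∫ x, f x ∂μ.withDensity (fun x => ENNReal.ofReal (q x))| ≤
      TV (μ.withDensity fun x => ENNReal.ofReal (p x))
        (μ.withDensity fun x => ENNReal.ofReal (q x)) := by
  have hf1 : ∀ᵐ x ∂μ, ‖f x‖ ≤ 1 := ae_of_all _ fun x => by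
    rw [Real.norm_eq_abs, abs_le]; exact ⟨by linarith [(hf01 x).1], (hf01 x).2⟩
  rw [hp.TV_withDensity hq, integral_sub_integral_withDensity_ofReal hp.integrable hp.nonneg
    hq.integrable hq.nonneg hf.aestronglyMeasurable hf1]
  refine abs_integral_mul_le_integral_max (hp.integrable.sub hq.integrable) ?_
    hf.aestronglyMeasurable hf01
  rw [integral_sub hp.integrable hq.integrable, hp.integral_eq_one, hq.integral_eq_one, sub_self]

theorem STV_le_TV (hp : IsProbDensity μ p) (hq : IsProbDensity μ q) {𝒰 : Set (X → ℝ)}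
    (h𝒰 : 𝒰.Nonempty) (h𝒰m : ∀ u ∈ 𝒰, Measurable u) {σ : ℝ → ℝ} (hB : AssumptionB σ) :
    STV 𝒰 σ (μ.withDensity fun x => ENNReal.ofReal (p x))
        (μ.withDensity fun x => ENNReal.ofReal (q x)) ≤
      TV (μ.withDensity fun x => ENNReal.ofReal (p x))
        (μ.withDensity fun x => ENNReal.ofReal (q x)) := by
  have : Nonempty (𝒰 × ℝ) := ⟨(⟨_, h𝒰.some_mem⟩, 0)⟩
  exact ciSup_le fun ub => hp.abs_integral_sub_le_TV hq
    (hB.measurable.comp ((h𝒰m _ ub.1.2).sub_const ub.2)) fun _ => hB.mem_Icc _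

theorem le_STV (hp : IsProbDensity μ p) (hq : IsProbDensity μ q) {𝒰 : Set (X → ℝ)}
    (h𝒰m : ∀ u ∈ 𝒰, Measurable u) {σ : ℝ → ℝ} (hB : AssumptionB σ) {u : X → ℝ} (hu : u ∈ 𝒰)
    (b : ℝ) :
    |∫ x, σ (u x - b) ∂μ.withDensity (fun x => ENNReal.ofReal (p x)) -
        ∫ x, σ (u x - b) ∂μ.withDensity (fun x => ENNReal.ofReal (q x))| ≤
      STV 𝒰 σ (μ.withDensity fun x => ENNReal.ofReal (p x))
        (μ.withDensity fun x => ENNReal.ofReal (q x)) := by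
  have hbound := fun ub : 𝒰 × ℝ => hp.abs_integral_sub_le_TV hq
    (hB.measurable.comp ((h𝒰m _ ub.1.2).sub_const ub.2)) fun _ => hB.mem_Icc _
  exact le_ciSup ⟨_, forall_mem_range.2 hbound⟩ (⟨u, hu⟩, b)

theorem TV_sub_integral_sub_integral_log_ratio_le (hp : IsProbDensity μ p)
    (hq : IsProbDensity μ q) (hp0 : ∀ᵐ x ∂μ, 0 < p x) (hq0 : ∀ᵐ x ∂μ, 0 < q x)
    {σ : ℝ → ℝ} (hB : AssumptionB σ) {C₀ c : ℝ} {lam : ℝ → ℝ} (hlam : DecayRate σ C₀ lam)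
    (hc : C₀ < c) :
    TV (μ.withDensity fun x => ENNReal.ofReal (p x))
          (μ.withDensity fun x => ENNReal.ofReal (q x)) -
        (∫ x, σ (c * Real.log (p x / q x)) ∂μ.withDensity (fun x => ENNReal.ofReal (p x)) -
          ∫ x, σ (c * Real.log (p x / q x)) ∂μ.withDensity (fun x => ENNReal.ofReal (q x))) ≤
      lam c * (1 - TV (μ.withDensity fun x => ENNReal.ofReal (p x))
        (μ.withDensity fun x => ENNReal.ofReal (q x))) := by
  have hf : Measurable fun x => σ (c * Real.log (p x / q x)) :=
    hB.measurable.comp ((Real.measurable_log.comp (hp.measurable.div hq.measurable)).const_mul c)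
  have hf1 : ∀ᵐ x ∂μ, ‖σ (c * Real.log (p x / q x))‖ ≤ 1 := ae_of_all _ fun x => by
    obtain ⟨h0, h1⟩ := hB.mem_Icc (c * Real.log (p x / q x))
    rwa [Real.norm_eq_abs, abs_of_nonneg h0]
  have hpq : Integrable (fun x => p x - q x) μ := hp.integrable.sub hq.integrable
  have hmin : ∫ x, min (p x) (q x) ∂μ = 1 - ∫ x, max (p x - q x) 0 ∂μ := by
    rw [← hp.integral_eq_one, ← integral_sub hp.integrable hpq.pos_part]
    congr 1 with x
    rcases le_total (p x) (q x) with h | h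
    · rw [min_eq_left h, max_eq_right (sub_nonpos.2 h), sub_zero]
    · rw [min_eq_right h, max_eq_left (sub_nonneg.2 h), sub_sub_cancel]
  rw [hp.TV_withDensity hq, integral_sub_integral_withDensity_ofReal hp.integrable hp.nonneg
    hq.integrable hq.nonneg hf.aestronglyMeasurable hf1, ← hmin, ← integral_const_mul,
    ← integral_sub hpq.pos_part (hpq.mul_bdd hf.aestronglyMeasurable hf1)]
  refine integral_mono_ae (hpq.pos_part.sub (hpq.mul_bdd hf.aestronglyMeasurable hf1))
    ((hp.integrable.inf hq.integrable).const_mul _) ?_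
  filter_upwards [hp0, hq0] with x hpx hqx
  exact hlam.max_sub_sub_mul_le_mul_min hB hc hpx hqx

end IsProbDensity

end Density

theorem tv_sub_stv_le_decay_general {X : Type*} [MeasurableSpace X] (μ : Measure X)
    (𝒰 : Set (X → ℝ)) (h𝒰m : ∀ u ∈ 𝒰, Measurable u)
    (σ : ℝ → ℝ) (hB : AssumptionB σ)
    (C₀ : ℝ) (lam : ℝ → ℝ) (hlam : DecayRate σ C₀ lam)
    (p q : X → ℝ) (hpm : Measurable p) (hqm : Measurable q)
    (hp : ∀ᵐ x ∂μ, 0 < p x) (hq : ∀ᵐ x ∂μ, 0 < q x)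
    (P Q : Measure X)
    (hP : P = μ.withDensity fun x => ENNReal.ofReal (p x))
    (hQ : Q = μ.withDensity fun x => ENNReal.ofReal (q x))
    [IsProbabilityMeasure P] [IsProbabilityMeasure Q]
    (hlog : ∃ u ∈ 𝒰, ∃ β : ℝ, ∀ᵐ x ∂μ, Real.log (p x / q x) = u x + β)
    (c : ℝ) (hc : C₀ < c) :
    0 ≤ TV P Q - STV ((fun u => fun x => c * u x) '' 𝒰) σ P Q ∧
      TV P Q - STV ((fun u => fun x => c * u x) '' 𝒰) σ P Q ≤ lam c * (1 - TV P Q) := by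
  subst hP hQ
  obtain ⟨u, hu, β, hlog⟩ := hlog
  have hpd := IsProbDensity.of_withDensity hpm (hp.mono fun _ => le_of_lt)
  have hqd := IsProbDensity.of_withDensity hqm (hq.mono fun _ => le_of_lt)
  have hc𝒰m : ∀ v ∈ (fun u => fun x => c * u x) '' 𝒰, Measurable v := by
    rintro _ ⟨u, hu, rfl⟩
    exact (h𝒰m u hu).const_mul c
  have hcu := mem_image_of_mem (fun u => fun x => c * u x) hu
  refine ⟨sub_nonneg.2 (hpd.STV_le_TV hqd ⟨_, hcu⟩ hc𝒰m hB), ?_⟩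
  have hS := hpd.le_STV hqd hc𝒰m hB hcu (-(c * β))
  have hσ : ∀ᵐ x ∂μ, σ (c * u x - -(c * β)) = σ (c * Real.log (p x / q x)) :=
    hlog.mono fun x hx => by rw [hx]; ring_nf
  rw [integral_congr_ae ((withDensity_absolutelyContinuous _ _).ae_le hσ),
    integral_congr_ae ((withDensity_absolutelyContinuous _ _).ae_le hσ)] at hS
  linarith [(le_abs_self _).trans hS,
    hpd.TV_sub_integral_sub_integral_log_ratio_le hqd hp hq hB hlam hc]

/-- quantitative gap between the TV distance and the STV distance with the
scaled function class `c𝒰`, in terms of a decay rate `lam` of `σ`. -/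
theorem tv_sub_stv_le_decay {X : Type*} [MeasurableSpace X] (μ : Measure X)
    (𝒰 : Set (X → ℝ)) (h𝒰0 : (fun _ => (0 : ℝ)) ∈ 𝒰) (h𝒰m : ∀ u ∈ 𝒰, Measurable u)
    (hA : ∀ u ∈ 𝒰, (fun x => -u x) ∈ 𝒰)
    (σ : ℝ → ℝ) (hB : AssumptionB σ)
    (C₀ : ℝ) (hC₀ : 0 < C₀) (lam : ℝ → ℝ) (hlam : DecayRate σ C₀ lam)
    (p q : X → ℝ) (hpm : Measurable p) (hqm : Measurable q)
    (hp : ∀ᵐ x ∂μ, 0 < p x) (hq : ∀ᵐ x ∂μ, 0 < q x)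
    (P Q : Measure X)
    (hP : P = μ.withDensity fun x => ENNReal.ofReal (p x))
    (hQ : Q = μ.withDensity fun x => ENNReal.ofReal (q x))
    [IsProbabilityMeasure P] [IsProbabilityMeasure Q]
    (hlog : ∃ u ∈ 𝒰, ∃ β : ℝ, ∀ᵐ x ∂μ, Real.log (p x / q x) = u x + β)
    (c : ℝ) (hc : C₀ < c) :
    0 ≤ TV P Q - STV ((fun u => fun x => c * u x) '' 𝒰) σ P Q ∧
      TV P Q - STV ((fun u => fun x => c * u x) '' 𝒰) σ P Q ≤ lam c * (1 - TV P Q) :=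
  tv_sub_stv_le_decay_general μ 𝒰 h𝒰m σ hB C₀ lam hlam p q hpm hqm hp hq P Q hP hQ hlog c hc
end

section
/- Suppose σ satisfies Assumption (B) with decay rate λ (with constant C₀ > 0). Let H be an RKHS on X, μ a Borel measure, and f, g ∈ H with ∫ e^{f} dμ < ∞, ∫ e^{g} dμ < ∞ and f ≠ g. Then whenever U/‖f−g‖ > C₀, 0 ≤ TV(P_f,P_g) − STV_{H_U,σ}(P_f,P_g) ≤ λ(U/‖f−g‖)·(1 − TV(P_f,P_g)). Consequently (also when f = g), lim_{U→∞} STV_{H_U,σ}(P_f, P_g) = TV(P_f, P_g). -/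
open MeasureTheory Filter
open scoped ENNReal NNReal

/-!
With densities `p = p_f`, `q = p_g`, the total variation is `∫ (p - q)⁺ dμ`, attained on
`{q ≤ p}`, and every test function with values in `[0, 1]` is dominated by it. Conversely, for
`c = U / ‖f - g‖` the function `u - b` with `u = c • (f - g) ∈ H_U` and `b = c (A f - A g)` equals
`c log (p / q)`, so `σ (u - b)` is a smoothed indicator of `{q ≤ p}`. The decay rate bounds its
pointwise defect by `λ c · min p q` (only one of `(p - q)⁺`, `(q - p)⁺` is nonzero), and
`∫ min p q = 1 - TV`. Letting `U → ∞` squeezes `STV` to `TV`.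
-/

lemma TV_nonneg {X : Type*} [MeasurableSpace X] (P Q : Measure X) : 0 ≤ TV P Q :=
  Real.iSup_nonneg fun _ => abs_nonneg _

section STV

variable {X : Type*} [MeasurableSpace X] {𝒰 : Set (X → ℝ)} {σ : ℝ → ℝ} {P Q : Measure X}
  {B : ℝ}

lemma le_STV (hB : ∀ u ∈ 𝒰, ∀ b, |∫ x, σ (u x - b) ∂P - ∫ x, σ (u x - b) ∂Q| ≤ B)
    {u : X → ℝ} (hu : u ∈ 𝒰) (b : ℝ) :
    |∫ x, σ (u x - b) ∂P - ∫ x, σ (u x - b) ∂Q| ≤ STV 𝒰 σ P Q :=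
  le_ciSup (f := fun ub : 𝒰 × ℝ => |∫ x, σ (ub.1.1 x - ub.2) ∂P - ∫ x, σ (ub.1.1 x - ub.2) ∂Q|)
    ⟨B, Set.forall_mem_range.2 fun ub => hB _ ub.1.2 _⟩ (⟨⟨u, hu⟩, b⟩ : 𝒰 × ℝ)

lemma STV_le (hB : ∀ u ∈ 𝒰, ∀ b, |∫ x, σ (u x - b) ∂P - ∫ x, σ (u x - b) ∂Q| ≤ B)
    (hB0 : 0 ≤ B) : STV 𝒰 σ P Q ≤ B :=
  Real.iSup_le (fun ub => hB _ ub.1.2 _) hB0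

end STV

namespace AssumptionB

variable {σ : ℝ → ℝ}

lemma nonneg (hσ : AssumptionB σ) (z : ℝ) : 0 ≤ σ z :=
  hσ.2.1.monotone.le_of_tendsto hσ.2.2.1 z

lemma le_one (hσ : AssumptionB σ) (z : ℝ) : σ z ≤ 1 :=
  hσ.2.1.monotone.ge_of_tendsto hσ.2.2.2.1 z

lemma one_sub_eq (hσ : AssumptionB σ) (z : ℝ) : 1 - σ z = σ (-z) := by
  linarith [hσ.2.2.2.2 z]

end AssumptionB

namespace DecayRate

variable {σ : ℝ → ℝ} {C₀ c : ℝ} {lam : ℝ → ℝ}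

lemma mul_sub_le (hlam : DecayRate σ C₀ lam) (hc : C₀ < c) {a b : ℝ} (hb : 0 < b)
    (hba : b ≤ a) : σ (-(c * Real.log (a / b))) * (a - b) ≤ lam c * b := by
  have h := mul_le_mul_of_nonneg_right (hlam.2 c hc (a / b) ((one_le_div hb).2 hba)) hb.le
  rwa [mul_assoc, sub_mul, div_mul_cancel₀ _ hb.ne', one_mul] at h

lemma max_sub_mul_add_max_sub_mul_le (hlam : DecayRate σ C₀ lam)
    (hc : C₀ < c) {a b : ℝ} (ha : 0 < a) (hb : 0 < b) :
    max (a - b) 0 * σ (-(c * (Real.log a - Real.log b))) +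
        max (b - a) 0 * σ (c * (Real.log a - Real.log b)) ≤ lam c * min a b := by
  rcases le_total b a with hba | hab
  · have h := hlam.mul_sub_le hc hb hba
    rw [Real.log_div ha.ne' hb.ne'] at h
    rw [max_eq_left (sub_nonneg.2 hba), max_eq_right (sub_nonpos.2 hba), min_eq_right hba]
    linarith
  · have h := hlam.mul_sub_le hc ha hab
    rw [Real.log_div hb.ne' ha.ne'] at h
    rw [max_eq_right (sub_nonpos.2 hab), max_eq_left (sub_nonneg.2 hab), min_eq_left hab,
      show c * (Real.log a - Real.log b) = -(c * (Real.log b - Real.log a)) by ring]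
    linarith

end DecayRate

section Density

variable {X : Type*} [MeasurableSpace X] {μ : Measure X} {p q h : X → ℝ}

structure IsProbDensity_s8 (μ : Measure X) (p : X → ℝ) : Prop where
  measurable : Measurable p
  nonneg : ∀ x, 0 ≤ p x
  integrable : Integrable p μ
  integral_eq_one : ∫ x, p x ∂μ = 1

noncomputable def densityMeasure (μ : Measure X) (p : X → ℝ) : Measure X :=
  μ.withDensity fun x => ENNReal.ofReal (p x)

lemma integral_densityMeasure (hp : Measurable p) (hp0 : ∀ x, 0 ≤ p x) (h : X → ℝ) :
    ∫ x, h x ∂densityMeasure μ p = ∫ x, p x * h x ∂μ := by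
  rw [densityMeasure, integral_withDensity_eq_integral_toReal_smul hp.ennreal_ofReal
    (ae_of_all _ fun _ => ENNReal.ofReal_lt_top)]
  simp only [ENNReal.toReal_ofReal (hp0 _), smul_eq_mul]

lemma MeasureTheory.Integrable.mul_of_mem_unitInterval (hp : Integrable p μ) (hh : Measurable h)
    (h0 : ∀ x, 0 ≤ h x) (h1 : ∀ x, h x ≤ 1) : Integrable (fun x => p x * h x) μ :=
  hp.mul_bdd hh.aestronglyMeasurable
    (ae_of_all _ fun x => by rw [Real.norm_eq_abs, abs_of_nonneg (h0 x)]; exact h1 x)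

lemma integral_sub_mul_le_integral_max (hp : Integrable p μ) (hq : Integrable q μ)
    (hh : Measurable h) (h0 : ∀ x, 0 ≤ h x) (h1 : ∀ x, h x ≤ 1) :
    ∫ x, (p x - q x) * h x ∂μ ≤ ∫ x, max (p x - q x) 0 ∂μ :=
  integral_mono ((hp.sub hq).mul_of_mem_unitInterval hh h0 h1) (hp.sub hq).pos_part fun x =>
    calc (p x - q x) * h x ≤ max (p x - q x) 0 * h x := by gcongr; exacts [h0 x, le_max_left _ _]
      _ ≤ max (p x - q x) 0 := mul_le_of_le_one_right (le_max_right _ _) (h1 x)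

lemma toReal_densityMeasure_apply (hp : Measurable p) (hp0 : ∀ x, 0 ≤ p x) {A : Set X}
    (hA : MeasurableSet A) :
    (densityMeasure μ p A).toReal = ∫ x, A.indicator p x ∂μ := by
  rw [← measureReal_def, ← integral_indicator_one hA, integral_densityMeasure hp hp0]
  congr 1 with x
  by_cases hx : x ∈ A <;> simp [hx]

namespace IsProbDensity_s8

lemma integral_max_sub_comm (hp : IsProbDensity_s8 μ p) (hq : IsProbDensity_s8 μ q) :
    ∫ x, max (q x - p x) 0 ∂μ = ∫ x, max (p x - q x) 0 ∂μ := by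
  have hpq : ∀ x, max (p x - q x) 0 - max (q x - p x) 0 = p x - q x := fun x => by
    rw [← neg_sub (p x), max_zero_sub_max_neg_zero_eq_self]
  have h : ∫ x, (max (p x - q x) 0 - max (q x - p x) 0) ∂μ =
      ∫ x, max (p x - q x) 0 ∂μ - ∫ x, max (q x - p x) 0 ∂μ :=
    integral_sub (hp.integrable.sub hq.integrable).pos_part
      (hq.integrable.sub hp.integrable).pos_part
  simp only [hpq] at h
  rw [integral_sub hp.integrable hq.integrable, hp.integral_eq_one,
    hq.integral_eq_one] at h
  linarith

lemma abs_integral_sub_le (hp : IsProbDensity_s8 μ p) (hq : IsProbDensity_s8 μ q)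
    (hh : Measurable h) (h0 : ∀ x, 0 ≤ h x) (h1 : ∀ x, h x ≤ 1) :
    |∫ x, h x ∂densityMeasure μ p - ∫ x, h x ∂densityMeasure μ q| ≤
      ∫ x, max (p x - q x) 0 ∂μ := by
  have hp' := hp.integrable.mul_of_mem_unitInterval hh h0 h1
  have hq' := hq.integrable.mul_of_mem_unitInterval hh h0 h1
  rw [integral_densityMeasure hp.measurable hp.nonneg,
    integral_densityMeasure hq.measurable hq.nonneg, abs_sub_le_iff, ← integral_sub hp' hq',
    ← integral_sub hq' hp']
  simp only [← sub_mul]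
  exact ⟨integral_sub_mul_le_integral_max hp.integrable hq.integrable hh h0 h1,
    (integral_sub_mul_le_integral_max hq.integrable hp.integrable hh h0 h1).trans_eq
      (hp.integral_max_sub_comm hq)⟩

lemma TV_densityMeasure (hp : IsProbDensity_s8 μ p) (hq : IsProbDensity_s8 μ q) :
    TV (densityMeasure μ p) (densityMeasure μ q) = ∫ x, max (p x - q x) 0 ∂μ := by
  have hle (A : {A : Set X // MeasurableSet A}) :
      |(densityMeasure μ p A.1).toReal - (densityMeasure μ q A.1).toReal| ≤
        ∫ x, max (p x - q x) 0 ∂μ := by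
    simpa only [integral_indicator_one A.2, measureReal_def] using
      hp.abs_integral_sub_le hq (measurable_one.indicator A.2)
        (Set.indicator_nonneg fun _ _ => zero_le_one) fun _ =>
          Set.indicator_apply_le' (fun _ => le_rfl) fun _ => zero_le_one
  have hA : MeasurableSet {x | q x ≤ p x} := measurableSet_le hq.measurable hp.measurable
  have hattained : (densityMeasure μ p {x | q x ≤ p x}).toReal -
      (densityMeasure μ q {x | q x ≤ p x}).toReal = ∫ x, max (p x - q x) 0 ∂μ := by
    rw [toReal_densityMeasure_apply hp.measurable hp.nonneg hA,
      toReal_densityMeasure_apply hq.measurable hq.nonneg hA,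
      ← integral_sub (hp.integrable.indicator hA) (hq.integrable.indicator hA)]
    congr 1 with x
    by_cases hx : q x ≤ p x
    · simp [hx]
    · simp [hx, (not_le.1 hx).le]
  have : Nonempty {A : Set X // MeasurableSet A} := ⟨⟨∅, .empty⟩⟩
  refine le_antisymm (ciSup_le hle) ?_
  rw [← hattained]
  exact (le_abs_self _).trans
    (le_ciSup ⟨_, Set.forall_mem_range.2 hle⟩ (⟨_, hA⟩ : {A : Set X // MeasurableSet A}))

lemma integral_min (hp : IsProbDensity_s8 μ p) (hq : IsProbDensity_s8 μ q) :
    ∫ x, min (p x) (q x) ∂μ = 1 - ∫ x, max (p x - q x) 0 ∂μ := by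
  have h (x : X) : min (p x) (q x) = p x - max (p x - q x) 0 := by
    rcases le_total (p x) (q x) with hx | hx <;> simp [hx]
  have hmax : Integrable (fun x => max (p x - q x) 0) μ :=
    (hp.integrable.sub hq.integrable).pos_part
  simp only [h, integral_sub hp.integrable hmax, hp.integral_eq_one]

lemma abs_integral_sub_le_TV_s8 (hp : IsProbDensity_s8 μ p) (hq : IsProbDensity_s8 μ q)
    (hh : Measurable h) (h0 : ∀ x, 0 ≤ h x) (h1 : ∀ x, h x ≤ 1) :
    |∫ x, h x ∂densityMeasure μ p - ∫ x, h x ∂densityMeasure μ q| ≤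
      TV (densityMeasure μ p) (densityMeasure μ q) :=
  hp.TV_densityMeasure hq ▸ hp.abs_integral_sub_le hq hh h0 h1

lemma abs_integral_comp_sub_le_TV (hp : IsProbDensity_s8 μ p) (hq : IsProbDensity_s8 μ q)
    {σ : ℝ → ℝ} (hσ : AssumptionB σ) {u : X → ℝ} (hu : Measurable u) (b : ℝ) :
    |∫ x, σ (u x - b) ∂densityMeasure μ p - ∫ x, σ (u x - b) ∂densityMeasure μ q| ≤
      TV (densityMeasure μ p) (densityMeasure μ q) :=
  hp.abs_integral_sub_le_TV_s8 hq (hσ.1.measurable.comp (hu.sub measurable_const))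
    (fun _ => hσ.nonneg _) fun _ => hσ.le_one _

lemma TV_sub_le_integral_sub (hp : IsProbDensity_s8 μ p) (hq : IsProbDensity_s8 μ q)
    (hp_pos : ∀ x, 0 < p x) (hq_pos : ∀ x, 0 < q x) {σ : ℝ → ℝ} (hσ : AssumptionB σ)
    {C₀ c : ℝ} {lam : ℝ → ℝ} (hlam : DecayRate σ C₀ lam) (hc : C₀ < c) :
    TV (densityMeasure μ p) (densityMeasure μ q) -
        lam c * (1 - TV (densityMeasure μ p) (densityMeasure μ q)) ≤
      ∫ x, σ (c * (Real.log (p x) - Real.log (q x))) ∂densityMeasure μ p -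
        ∫ x, σ (c * (Real.log (p x) - Real.log (q x))) ∂densityMeasure μ q := by
  set z : X → ℝ := fun x => c * (Real.log (p x) - Real.log (q x))
  have hz : Measurable z := (hp.measurable.log.sub hq.measurable.log).const_mul c
  have hσz : Measurable fun x => σ (z x) := hσ.1.measurable.comp hz
  have hσnz : Measurable fun x => σ (-z x) := hσ.1.measurable.comp hz.neg
  have hD : Integrable (fun x => max (p x - q x) 0) μ := (hp.integrable.sub hq.integrable).pos_part
  set G : X → ℝ := fun x => max (p x - q x) 0 * σ (-z x) + max (q x - p x) 0 * σ (z x)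
  have hG : Integrable G μ :=
    (hD.mul_of_mem_unitInterval hσnz (fun _ => hσ.nonneg _) fun _ => hσ.le_one _).add
      ((hq.integrable.sub hp.integrable).pos_part.mul_of_mem_unitInterval hσz
        (fun _ => hσ.nonneg _) fun _ => hσ.le_one _)
  have hG_le : ∫ x, G x ∂μ ≤ lam c * (1 - ∫ x, max (p x - q x) 0 ∂μ) := by
    rw [← hp.integral_min hq, ← integral_const_mul]
    exact integral_mono hG ((hp.integrable.inf hq.integrable).const_mul _) fun x =>
      hlam.max_sub_mul_add_max_sub_mul_le hc (hp_pos x) (hq_pos x)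
  have hsplit : ∫ x, σ (z x) ∂densityMeasure μ p - ∫ x, σ (z x) ∂densityMeasure μ q =
      ∫ x, max (p x - q x) 0 ∂μ - ∫ x, G x ∂μ := by
    rw [integral_densityMeasure hp.measurable hp.nonneg,
      integral_densityMeasure hq.measurable hq.nonneg, ← integral_sub hD hG,
      ← integral_sub (hp.integrable.mul_of_mem_unitInterval hσz (fun _ => hσ.nonneg _)
        fun _ => hσ.le_one _) (hq.integrable.mul_of_mem_unitInterval hσz
          (fun _ => hσ.nonneg _) fun _ => hσ.le_one _)]
    congr 1 with x
    have hpq := max_zero_sub_max_neg_zero_eq_self (p x - q x)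
    rw [neg_sub] at hpq
    simp only [G]
    linear_combination -σ (z x) * hpq - max (p x - q x) 0 * hσ.one_sub_eq (z x)
  rw [hp.TV_densityMeasure hq, hsplit]
  linarith

end IsProbDensity_s8

end Density

lemma evalH_smul_sub {X H : Type*} [NormedAddCommGroup H] [InnerProductSpace ℝ H] (φ : X → H)
    (c : ℝ) (f g : H) (x : X) : evalH φ (c • (f - g)) x = c * (evalH φ f x - evalH φ g x) := by
  simp only [evalH, real_inner_smul_left, inner_sub_left]

lemma norm_div_norm_smul_self {E : Type*} [NormedAddCommGroup E] [NormedSpace ℝ E] {v : E}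
    (hv : v ≠ 0) {U : ℝ} (hU : 0 ≤ U) : ‖(U / ‖v‖) • v‖ = U := by
  rw [norm_smul, Real.norm_eq_abs, abs_div, abs_norm, abs_of_nonneg hU,
    div_mul_cancel₀ _ (norm_ne_zero_iff.2 hv)]

section KernelExpFamily

variable {X H : Type*} [MeasurableSpace X] [NormedAddCommGroup H] [InnerProductSpace ℝ H]
  {φ : X → H} {μ : Measure X} {f g : H}

-- `Pexp μ φ f` is by definition `densityMeasure μ (expFamDensity μ φ f)`.
noncomputable def expFamDensity (μ : Measure X) (φ : X → H) (f : H) : X → ℝ :=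
  fun x => Real.exp (evalH φ f x - logPartition μ φ f)

lemma log_expFamDensity (x : X) :
    Real.log (expFamDensity μ φ f x) = evalH φ f x - logPartition μ φ f :=
  Real.log_exp _

lemma measurable_of_mem_ballFuns (hmeas : ∀ h : H, Measurable (evalH φ h)) {U : ℝ}
    {u : X → ℝ} (hu : u ∈ ballFuns φ U) : Measurable u := by
  obtain ⟨h, -, rfl⟩ := hu
  exact hmeas h

lemma isProbDensity_expFamDensity (hmeas : Measurable (evalH φ f)) (hμ : μ ≠ 0)
    (hf : Integrable (fun x => Real.exp (evalH φ f x)) μ) :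
    IsProbDensity_s8 μ (expFamDensity μ φ f) := by
  have : NeZero μ := ⟨hμ⟩
  have hZ := integral_exp_pos hf
  have hdens : expFamDensity μ φ f =
      fun x => Real.exp (evalH φ f x) / ∫ x, Real.exp (evalH φ f x) ∂μ := by
    funext x
    rw [expFamDensity, Real.exp_sub, logPartition, Real.exp_log hZ]
  refine ⟨(hmeas.sub_const _).exp, fun _ => (Real.exp_pos _).le, hdens ▸ hf.div_const _, ?_⟩
  rw [hdens, integral_div, div_self hZ.ne']

variable {σ : ℝ → ℝ} {C₀ c : ℝ} {lam : ℝ → ℝ}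

lemma STV_ballFuns_le_TV (hmeas : ∀ h : H, Measurable (evalH φ h)) (hμ : μ ≠ 0)
    (hf : Integrable (fun x => Real.exp (evalH φ f x)) μ)
    (hg : Integrable (fun x => Real.exp (evalH φ g x)) μ) (hσ : AssumptionB σ) (U : ℝ) :
    STV (ballFuns φ U) σ (Pexp μ φ f) (Pexp μ φ g) ≤ TV (Pexp μ φ f) (Pexp μ φ g) :=
  STV_le (fun _ hu => (isProbDensity_expFamDensity (hmeas f) hμ hf).abs_integral_comp_sub_le_TV
    (isProbDensity_expFamDensity (hmeas g) hμ hg) hσ (measurable_of_mem_ballFuns hmeas hu))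
    (TV_nonneg _ _)

lemma TV_sub_le_STV_ballFuns (hmeas : ∀ h : H, Measurable (evalH φ h)) (hμ : μ ≠ 0)
    (hf : Integrable (fun x => Real.exp (evalH φ f x)) μ)
    (hg : Integrable (fun x => Real.exp (evalH φ g x)) μ) (hσ : AssumptionB σ)
    (hlam : DecayRate σ C₀ lam) (hc : C₀ < c) {U : ℝ} (hU : ‖c • (f - g)‖ ≤ U) :
    TV (Pexp μ φ f) (Pexp μ φ g) - lam c * (1 - TV (Pexp μ φ f) (Pexp μ φ g)) ≤
      STV (ballFuns φ U) σ (Pexp μ φ f) (Pexp μ φ g) := by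
  have hp := isProbDensity_expFamDensity (hmeas f) hμ hf
  have hq := isProbDensity_expFamDensity (hmeas g) hμ hg
  have hgap := hp.TV_sub_le_integral_sub hq (fun _ => Real.exp_pos _) (fun _ => Real.exp_pos _)
    hσ hlam hc
  have harg (x : X) : c * (Real.log (expFamDensity μ φ f x) - Real.log (expFamDensity μ φ g x)) =
      evalH φ (c • (f - g)) x - c * (logPartition μ φ f - logPartition μ φ g) := by
    rw [log_expFamDensity, log_expFamDensity, evalH_smul_sub]
    ring
  simp only [harg] at hgap
  exact hgap.trans ((le_abs_self _).trans (le_STV (fun _ hu => hp.abs_integral_comp_sub_le_TV hq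
    hσ (measurable_of_mem_ballFuns hmeas hu)) ⟨c • (f - g), hU, rfl⟩ _))

end KernelExpFamily

/-- for `σ` satisfying Assumption (B) with decay rate `lam` (constant `C₀`),
the gap between TV and STV over `H_U` for two members of the kernel exponential family is
controlled by `lam (U/‖f-g‖)`, and the STV distance over `H_U` converges to the TV
distance as `U → ∞` (also when `f = g`). -/
theorem stv_kernel_exp_gap_and_limit {X : Type*} [MeasurableSpace X]
    {H : Type*} [NormedAddCommGroup H] [InnerProductSpace ℝ H]
    (φ : X → H) (hmeas : ∀ h : H, Measurable (evalH φ h))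
    (μ : Measure X) (hμ : μ ≠ 0)
    (σ : ℝ → ℝ) (hB : AssumptionB σ)
    (C₀ : ℝ) (hC₀ : 0 < C₀) (lam : ℝ → ℝ) (hlam : DecayRate σ C₀ lam)
    (f g : H)
    (hf : Integrable (fun x => Real.exp (evalH φ f x)) μ)
    (hg : Integrable (fun x => Real.exp (evalH φ g x)) μ) :
    (f ≠ g → ∀ U : ℝ, C₀ < U / ‖f - g‖ →
      0 ≤ TV (Pexp μ φ f) (Pexp μ φ g) - STV (ballFuns φ U) σ (Pexp μ φ f) (Pexp μ φ g) ∧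
        TV (Pexp μ φ f) (Pexp μ φ g) - STV (ballFuns φ U) σ (Pexp μ φ f) (Pexp μ φ g) ≤
          lam (U / ‖f - g‖) * (1 - TV (Pexp μ φ f) (Pexp μ φ g))) ∧
      Tendsto (fun U : ℝ => STV (ballFuns φ U) σ (Pexp μ φ f) (Pexp μ φ g)) atTop
        (nhds (TV (Pexp μ φ f) (Pexp μ φ g))) := by
  have hle := STV_ballFuns_le_TV hmeas hμ hf hg hB
  refine ⟨fun hfg U hU => ?_, ?_⟩
  · have hU0 : 0 ≤ U := (div_pos_iff_of_pos_right (norm_pos_iff.2 (sub_ne_zero.2 hfg))).1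
      (hC₀.trans hU) |>.le
    have := TV_sub_le_STV_ballFuns hmeas hμ hf hg hB hlam hU
      (norm_div_norm_smul_self (sub_ne_zero.2 hfg) hU0).le
    constructor <;> linarith [hle U]
  · obtain ⟨c, hc_top, hc_norm⟩ : ∃ c : ℝ → ℝ, Tendsto c atTop atTop ∧
        ∀ U, 0 ≤ U → ‖c U • (f - g)‖ ≤ U := by
      rcases eq_or_ne f g with rfl | hfg
      · exact ⟨id, tendsto_id, fun U hU => by simpa using hU⟩
      · exact ⟨fun U => U / ‖f - g‖,
          tendsto_id.atTop_div_const (norm_pos_iff.2 (sub_ne_zero.2 hfg)),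
          fun U hU => (norm_div_norm_smul_self (sub_ne_zero.2 hfg) hU).le⟩
    have hlower : Tendsto (fun U => TV (Pexp μ φ f) (Pexp μ φ g) -
        lam (c U) * (1 - TV (Pexp μ φ f) (Pexp μ φ g))) atTop
          (nhds (TV (Pexp μ φ f) (Pexp μ φ g))) := by
      simpa using tendsto_const_nhds.sub ((hlam.1.comp hc_top).mul_const
        (1 - TV (Pexp μ φ f) (Pexp μ φ g)))
    refine tendsto_of_tendsto_of_tendsto_of_le_of_le' hlower tendsto_const_nhds ?_
      (Eventually.of_forall hle)
    filter_upwards [hc_top.eventually_gt_atTop C₀, eventually_ge_atTop 0] with U hcU hU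
    exact TV_sub_le_STV_ballFuns hmeas hμ hf hg hB hlam hcU (hc_norm U hU)
end

section
/- Let H be an RKHS of real-valued functions on X with kernel k satisfying sup_{x∈X} k(x,x) ≤ 1, and let μ be a Borel measure on X with μ(X) = 1, so that P₀ := μ equals P_f for f = 0. Let r ≥ (log 2)/4 and f, g ∈ H with ‖f‖ ≤ r and ‖g‖ ≤ r (and ∫ e^{f} dμ, ∫ e^{g} dμ < ∞). Then TV(P_f, P_g) ≥ (‖f−g‖ / (32·r·e^{2r})) · ξ(H), where ξ(H) := inf_{s ∈ H, ‖s‖ = 1} ∫ |s(x) − ∫ s dμ|² dμ(x). -/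
open MeasureTheory Filter
open scoped ENNReal NNReal

/-- `ξ(H) = inf_{s ∈ H, ‖s‖ = 1} ∫ |s(x) - ∫ s dμ|² dμ(x)` for the RKHS given by the
feature map `φ`. -/
noncomputable def xiH {X H : Type*} [MeasurableSpace X] [NormedAddCommGroup H]
    [InnerProductSpace ℝ H] (φ : X → H) (μ : Measure X) : ℝ :=
  ⨅ s : {s : H // ‖s‖ = 1}, ∫ x, |evalH φ s.1 x - ∫ y, evalH φ s.1 y ∂μ| ^ 2 ∂μ


/-! Since `|f(x)| ≤ ‖f‖` for a kernel bounded by one, also `|A(f)| ≤ ‖f‖`, so the exponents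
`f - A(f)` of the densities `p_f` lie in `[-2r, 2r]`. On that range `exp` expands distances by at
least `e^{-2r}`, whence `∫ |(f - g) - (A(f) - A(g))| dμ ≤ e^{2r} ∫ |p_f - p_g| dμ ≤ 2 e^{2r} TV`.
For `t = f - g` and any constant `c`, `∫ |t - ∫ t| ≤ 2 ∫ |t - c|`; and since `|t| ≤ ‖f - g‖`, the
variance satisfies `∫ |t - ∫ t|² ≤ ‖f - g‖ ∫ |t - ∫ t|`, while by definition of `ξ(H)` it is at
least `‖f - g‖² ξ(H)`. Chaining gives `‖f - g‖ ξ(H) ≤ 4 e^{2r} TV`, and `4 ≤ 32 r` as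
`r ≥ (log 2)/4 > 1/8`. -/

open Real

theorem Real.abs_sub_le_exp_mul_abs_exp_sub {R a b : ℝ} (ha : -R ≤ a) (hb : -R ≤ b) :
    |a - b| ≤ exp R * |exp a - exp b| := by
  wlog hba : b ≤ a generalizing a b
  · rw [abs_sub_comm a, abs_sub_comm (exp a)]
    exact this hb ha (le_of_not_ge hba)
  have tangent : a - b ≤ exp (-b) * (exp a - exp b) := by
    have := add_one_le_exp (a - b)
    rw [mul_sub, ← exp_add, ← exp_add, neg_add_cancel, exp_zero, neg_add_eq_sub]
    linarith
  rw [abs_of_nonneg (sub_nonneg.2 hba), abs_of_nonneg (sub_nonneg.2 (exp_le_exp.2 hba))]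
  exact tangent.trans (mul_le_mul_of_nonneg_right (exp_le_exp.2 (by linarith))
    (sub_nonneg.2 (exp_le_exp.2 hba)))

section TotalVariation

variable {X : Type*} [MeasurableSpace X]

theorem abs_sub_le_TV (P Q : Measure X) [IsFiniteMeasure P] [IsFiniteMeasure Q] {A : Set X}
    (hA : MeasurableSet A) : |(P A).toReal - (Q A).toReal| ≤ TV P Q := by
  refine le_ciSup
    (f := fun B : {B : Set X // MeasurableSet B} => |(P B.1).toReal - (Q B.1).toReal|)
    ⟨(P Set.univ).toReal + (Q Set.univ).toReal, ?_⟩ ⟨A, hA⟩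
  rintro _ ⟨B, rfl⟩
  have hP : (P B.1).toReal ≤ (P Set.univ).toReal := measureReal_mono (Set.subset_univ _)
  have hQ : (Q B.1).toReal ≤ (Q Set.univ).toReal := measureReal_mono (Set.subset_univ _)
  have hP0 : 0 ≤ (P Set.univ).toReal := ENNReal.toReal_nonneg
  have hQ0 : 0 ≤ (Q Set.univ).toReal := ENNReal.toReal_nonneg
  exact abs_sub_le_of_nonneg_of_le ENNReal.toReal_nonneg (by linarith) ENNReal.toReal_nonneg
    (by linarith)

theorem toReal_withDensity_ofReal_apply {μ : Measure X} {p : X → ℝ} (hp : Integrable p μ)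
    (hp0 : 0 ≤ᵐ[μ] p) {A : Set X} (hA : MeasurableSet A) :
    (μ.withDensity (fun x => ENNReal.ofReal (p x)) A).toReal = ∫ x in A, p x ∂μ := by
  rw [withDensity_apply _ hA, ← ofReal_integral_eq_lintegral_ofReal hp.restrict
    (ae_restrict_of_ae hp0), ENNReal.toReal_ofReal (integral_nonneg_of_ae (ae_restrict_of_ae hp0))]

theorem integral_abs_sub_le_two_mul_TV {μ : Measure X} {p q : X → ℝ} (hpm : Measurable p)
    (hqm : Measurable q) (hp : Integrable p μ) (hq : Integrable q μ) (hp0 : 0 ≤ᵐ[μ] p)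
    (hq0 : 0 ≤ᵐ[μ] q) :
    ∫ x, |p x - q x| ∂μ ≤ 2 * TV (μ.withDensity fun x => ENNReal.ofReal (p x))
      (μ.withDensity fun x => ENNReal.ofReal (q x)) := by
  set P := μ.withDensity fun x => ENNReal.ofReal (p x)
  set Q := μ.withDensity fun x => ENNReal.ofReal (q x)
  have : IsFiniteMeasure P := isFiniteMeasure_withDensity_ofReal hp.2
  have : IsFiniteMeasure Q := isFiniteMeasure_withDensity_ofReal hq.2
  set A := {x | q x ≤ p x}
  have hA : MeasurableSet A := measurableSet_le hqm hpm
  have on_A : ∫ x in A, |p x - q x| ∂μ = (P A).toReal - (Q A).toReal := by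
    rw [toReal_withDensity_ofReal_apply hp hp0 hA, toReal_withDensity_ofReal_apply hq hq0 hA,
      ← integral_sub hp.restrict hq.restrict]
    exact setIntegral_congr_fun hA fun x hx => abs_of_nonneg (sub_nonneg.2 hx)
  have on_compl : ∫ x in Aᶜ, |p x - q x| ∂μ = (Q Aᶜ).toReal - (P Aᶜ).toReal := by
    rw [toReal_withDensity_ofReal_apply hp hp0 hA.compl,
      toReal_withDensity_ofReal_apply hq hq0 hA.compl, ← integral_sub hq.restrict hp.restrict]
    exact setIntegral_congr_fun hA.compl fun x hx =>
      abs_of_neg (sub_neg.2 (not_le.1 (show ¬q x ≤ p x from hx))) |>.trans (neg_sub _ _)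
  rw [← integral_add_compl (f := fun x => |p x - q x|) hA (hp.sub hq).abs, two_mul]
  refine add_le_add ?_ ?_
  · rw [on_A]
    exact (le_abs_self _).trans (abs_sub_le_TV P Q hA)
  · rw [on_compl]
    exact (le_abs_self _).trans (abs_sub_comm (P Aᶜ).toReal _ ▸ abs_sub_le_TV P Q hA.compl)

end TotalVariation

section Centering

variable {X : Type*} [MeasurableSpace X] {μ : Measure X} [IsProbabilityMeasure μ] {t : X → ℝ}

theorem integral_abs_sub_integral_le_two_mul (ht : Integrable t μ) (c : ℝ) :
    ∫ x, |t x - ∫ y, t y ∂μ| ∂μ ≤ 2 * ∫ x, |t x - c| ∂μ := by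
  set m := ∫ y, t y ∂μ
  have htc : Integrable (fun x => |t x - c|) μ := (ht.sub (integrable_const c)).abs
  have hcm : |c - m| ≤ ∫ x, |t x - c| ∂μ :=
    calc |c - m| = |∫ x, (c - t x) ∂μ| := by
          rw [integral_sub (integrable_const c) ht, integral_const, probReal_univ, one_smul]
      _ ≤ ∫ x, |c - t x| ∂μ := abs_integral_le_integral_abs
      _ = ∫ x, |t x - c| ∂μ := by simp_rw [abs_sub_comm]
  calc ∫ x, |t x - m| ∂μ ≤ ∫ x, (|t x - c| + |c - m|) ∂μ :=
        integral_mono (ht.sub (integrable_const m)).abs (htc.add (integrable_const _))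
          fun x => abs_sub_le _ _ _
    _ = ∫ x, |t x - c| ∂μ + |c - m| := by
        rw [integral_add htc (integrable_const _), integral_const, probReal_univ, one_smul]
    _ ≤ 2 * ∫ x, |t x - c| ∂μ := by linarith

theorem integral_sq_sub_integral_le {d : ℝ} (ht : AEStronglyMeasurable t μ)
    (hd : ∀ x, |t x| ≤ d) :
    ∫ x, |t x - ∫ y, t y ∂μ| ^ 2 ∂μ ≤ d * ∫ x, |t x - ∫ y, t y ∂μ| ∂μ := by
  set m := ∫ y, t y ∂μ
  have hti : Integrable t μ := .of_bound ht d (ae_of_all _ hd)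
  have hcentered : Integrable (fun x => t x - m) μ := hti.sub (integrable_const m)
  have hprod : Integrable (fun x => (t x - m) * t x) μ :=
    hcentered.mul_bdd ht (ae_of_all _ hd)
  -- `∫ (t - m) m = 0`, so only `∫ (t - m) t` is left, and there `|t| ≤ d`
  have hvar : ∫ x, |t x - m| ^ 2 ∂μ = ∫ x, (t x - m) * t x ∂μ := by
    calc ∫ x, |t x - m| ^ 2 ∂μ = ∫ x, ((t x - m) * t x - (t x - m) * m) ∂μ := by
          congr 1; ext x; rw [sq_abs]; ring
      _ = ∫ x, (t x - m) * t x ∂μ := by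
          rw [integral_sub hprod (hcentered.mul_const m), integral_mul_const,
            integral_sub hti (integrable_const m), integral_const, probReal_univ, one_smul,
            sub_self, zero_mul, sub_zero]
  rw [hvar, ← integral_const_mul]
  refine integral_mono hprod (hcentered.abs.const_mul d) fun x => ?_
  calc (t x - m) * t x ≤ |t x - m| * |t x| := abs_mul (t x - m) (t x) ▸ le_abs_self _
    _ ≤ |t x - m| * d := by gcongr; exact hd x
    _ = d * |t x - m| := mul_comm _ _

end Centering

section KernelExponentialFamily

variable {X H : Type*} [NormedAddCommGroup H] [InnerProductSpace ℝ H] {φ : X → H}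

theorem evalH_sub (f g : H) : evalH φ (f - g) = evalH φ f - evalH φ g := by
  ext x
  simp [evalH, inner_sub_left]

theorem evalH_smul (a : ℝ) (f : H) : evalH φ (a • f) = a • evalH φ f := by
  ext x
  simp [evalH, real_inner_smul_left]

theorem abs_evalH_le (hk : ∀ x, (inner ℝ (φ x) (φ x) : ℝ) ≤ 1) (h : H) (x : X) :
    |evalH φ h x| ≤ ‖h‖ := by
  have hφ : ‖φ x‖ ≤ 1 := by
    have := hk x
    rw [real_inner_self_eq_norm_sq] at this
    exact (sq_le_one_iff₀ (norm_nonneg _)).1 this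
  exact (abs_real_inner_le_norm h (φ x)).trans (mul_le_of_le_one_right (norm_nonneg h) hφ)

variable [MeasurableSpace X] {μ : Measure X}

theorem xiH_le_of_norm_eq_one {s : H} (hs : ‖s‖ = 1) :
    xiH φ μ ≤ ∫ x, |evalH φ s x - ∫ y, evalH φ s y ∂μ| ^ 2 ∂μ := by
  refine ciInf_le (f := fun u : {s : H // ‖s‖ = 1} =>
    ∫ x, |evalH φ u.1 x - ∫ y, evalH φ u.1 y ∂μ| ^ 2 ∂μ) ⟨0, ?_⟩ ⟨s, hs⟩
  rintro _ ⟨u, rfl⟩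
  exact integral_nonneg fun x => sq_nonneg _

theorem sq_norm_mul_xiH_le (h : H) :
    ‖h‖ ^ 2 * xiH φ μ ≤ ∫ x, |evalH φ h x - ∫ y, evalH φ h y ∂μ| ^ 2 ∂μ := by
  rcases eq_or_ne h 0 with rfl | hh
  · rw [norm_zero, zero_pow two_ne_zero, zero_mul]
    exact integral_nonneg fun x => sq_nonneg _
  have hs : ‖(‖h‖⁻¹ : ℝ) • h‖ = 1 := by
    rw [norm_smul, norm_inv, norm_norm, inv_mul_cancel₀ (norm_ne_zero_iff.2 hh)]
  have hscale : ∫ x, |evalH φ ((‖h‖⁻¹ : ℝ) • h) x - ∫ y, evalH φ ((‖h‖⁻¹ : ℝ) • h) y ∂μ| ^ 2 ∂μ =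
      ‖h‖⁻¹ ^ 2 * ∫ x, |evalH φ h x - ∫ y, evalH φ h y ∂μ| ^ 2 ∂μ := by
    simp only [evalH_smul, Pi.smul_apply, smul_eq_mul, integral_const_mul, ← mul_sub,
      abs_mul, mul_pow, sq_abs]
  calc ‖h‖ ^ 2 * xiH φ μ
      ≤ ‖h‖ ^ 2 * (‖h‖⁻¹ ^ 2 * ∫ x, |evalH φ h x - ∫ y, evalH φ h y ∂μ| ^ 2 ∂μ) := by
        rw [← hscale]; gcongr; exact xiH_le_of_norm_eq_one hs
    _ = ∫ x, |evalH φ h x - ∫ y, evalH φ h y ∂μ| ^ 2 ∂μ := by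
        field_simp

theorem integrable_evalH [IsFiniteMeasure μ] (hk : ∀ x, (inner ℝ (φ x) (φ x) : ℝ) ≤ 1) {h : H}
    (hm : Measurable (evalH φ h)) : Integrable (evalH φ h) μ :=
  .of_bound hm.aestronglyMeasurable ‖h‖ (ae_of_all _ (abs_evalH_le hk h))

theorem norm_mul_xiH_le_two_mul_integral_abs_sub [IsProbabilityMeasure μ]
    (hk : ∀ x, (inner ℝ (φ x) (φ x) : ℝ) ≤ 1) {h : H} (hm : Measurable (evalH φ h)) (c : ℝ) :
    ‖h‖ * xiH φ μ ≤ 2 * ∫ x, |evalH φ h x - c| ∂μ := by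
  rcases (norm_nonneg h).eq_or_lt with h0 | hpos
  · rw [← h0, zero_mul]
    exact mul_nonneg zero_le_two (integral_nonneg fun x => abs_nonneg _)
  refine le_of_mul_le_mul_left ?_ hpos
  calc ‖h‖ * (‖h‖ * xiH φ μ) = ‖h‖ ^ 2 * xiH φ μ := by ring
    _ ≤ ∫ x, |evalH φ h x - ∫ y, evalH φ h y ∂μ| ^ 2 ∂μ := sq_norm_mul_xiH_le h
    _ ≤ ‖h‖ * ∫ x, |evalH φ h x - ∫ y, evalH φ h y ∂μ| ∂μ :=
        integral_sq_sub_integral_le hm.aestronglyMeasurable (abs_evalH_le hk h)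
    _ ≤ ‖h‖ * (2 * ∫ x, |evalH φ h x - c| ∂μ) := by
        gcongr
        exact integral_abs_sub_integral_le_two_mul (integrable_evalH hk hm) c

theorem abs_logPartition_le [IsProbabilityMeasure μ] (hk : ∀ x, (inner ℝ (φ x) (φ x) : ℝ) ≤ 1)
    {h : H} (hm : Measurable (evalH φ h)) : |logPartition μ φ h| ≤ ‖h‖ := by
  have hb x := abs_le.1 (abs_evalH_le hk h x)
  have hint : Integrable (fun x => exp (evalH φ h x)) μ :=
    .of_bound hm.exp.aestronglyMeasurable (exp ‖h‖) (ae_of_all _ fun x => by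
      rw [norm_eq_abs, abs_exp]; exact exp_le_exp.2 (hb x).2)
  have lower : exp (-‖h‖) ≤ ∫ x, exp (evalH φ h x) ∂μ := by
    simpa using integral_mono (integrable_const _) hint fun x => exp_le_exp.2 (hb x).1
  have upper : ∫ x, exp (evalH φ h x) ∂μ ≤ exp ‖h‖ := by
    simpa using integral_mono hint (integrable_const _) fun x => exp_le_exp.2 (hb x).2
  have hpos := (exp_pos _).trans_le lower
  rw [logPartition, abs_le, le_log_iff_exp_le hpos, log_le_iff_le_exp hpos]
  exact ⟨lower, upper⟩

theorem abs_evalH_sub_logPartition_le [IsProbabilityMeasure μ]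
    (hk : ∀ x, (inner ℝ (φ x) (φ x) : ℝ) ≤ 1) {h : H} (hm : Measurable (evalH φ h)) (x : X) :
    |evalH φ h x - logPartition μ φ h| ≤ 2 * ‖h‖ := by
  linarith [abs_sub (evalH φ h x) (logPartition μ φ h), abs_evalH_le hk h x,
    abs_logPartition_le (μ := μ) hk hm]

/-- The density `p_f` of `Pexp μ φ f` with respect to `μ`. -/
noncomputable def expDensity (μ : Measure X) (φ : X → H) (f : H) (x : X) : ℝ :=
  exp (evalH φ f x - logPartition μ φ f)

theorem measurable_expDensity {h : H} (hm : Measurable (evalH φ h)) :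
    Measurable (expDensity μ φ h) :=
  (hm.sub measurable_const).exp

theorem integrable_expDensity [IsProbabilityMeasure μ] (hk : ∀ x, (inner ℝ (φ x) (φ x) : ℝ) ≤ 1)
    {h : H} (hm : Measurable (evalH φ h)) : Integrable (expDensity μ φ h) μ :=
  .of_bound (measurable_expDensity hm).aestronglyMeasurable (exp (2 * ‖h‖)) (ae_of_all _ fun x => by
    rw [norm_eq_abs, expDensity, abs_exp]
    exact exp_le_exp.2 (abs_le.1 (abs_evalH_sub_logPartition_le hk hm x)).2)

theorem integral_abs_expDensity_sub_le_two_mul_TV [IsProbabilityMeasure μ]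
    (hk : ∀ x, (inner ℝ (φ x) (φ x) : ℝ) ≤ 1) {f g : H} (hfm : Measurable (evalH φ f))
    (hgm : Measurable (evalH φ g)) :
    ∫ x, |expDensity μ φ f x - expDensity μ φ g x| ∂μ ≤ 2 * TV (Pexp μ φ f) (Pexp μ φ g) :=
  integral_abs_sub_le_two_mul_TV (measurable_expDensity hfm) (measurable_expDensity hgm)
    (integrable_expDensity hk hfm) (integrable_expDensity hk hgm)
    (ae_of_all _ fun _ => (exp_pos _).le) (ae_of_all _ fun _ => (exp_pos _).le)

theorem abs_evalH_sub_sub_le_exp_mul_abs_expDensity_sub [IsProbabilityMeasure μ]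
    (hk : ∀ x, (inner ℝ (φ x) (φ x) : ℝ) ≤ 1) {r : ℝ} {f g : H} (hfm : Measurable (evalH φ f))
    (hgm : Measurable (evalH φ g)) (hfr : ‖f‖ ≤ r) (hgr : ‖g‖ ≤ r) (x : X) :
    |evalH φ (f - g) x - (logPartition μ φ f - logPartition μ φ g)| ≤
      exp (2 * r) * |expDensity μ φ f x - expDensity μ φ g x| := by
  have hf := (abs_le.1 (abs_evalH_sub_logPartition_le (μ := μ) hk hfm x)).1
  have hg := (abs_le.1 (abs_evalH_sub_logPartition_le (μ := μ) hk hgm x)).1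
  have := abs_sub_le_exp_mul_abs_exp_sub (R := 2 * r) (a := evalH φ f x - logPartition μ φ f)
    (b := evalH φ g x - logPartition μ φ g) (by linarith) (by linarith)
  rw [sub_sub_sub_comm] at this
  simpa only [expDensity, evalH_sub, Pi.sub_apply] using this

end KernelExponentialFamily

theorem tv_lower_bound_rkhs_norm_general {X : Type*} [MeasurableSpace X]
    {H : Type*} [NormedAddCommGroup H] [InnerProductSpace ℝ H]
    (φ : X → H) (hmeas : ∀ h : H, Measurable (evalH φ h))
    (hk : ∀ x, (inner ℝ (φ x) (φ x) : ℝ) ≤ 1)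
    (μ : Measure X) [IsProbabilityMeasure μ]
    (r : ℝ) (hr : Real.log 2 / 4 ≤ r)
    (f g : H) (hfr : ‖f‖ ≤ r) (hgr : ‖g‖ ≤ r) :
    ‖f - g‖ / (32 * r * Real.exp (2 * r)) * xiH φ μ ≤
      TV (Pexp μ φ f) (Pexp μ φ g) := by
  have hr4 : 4 ≤ 32 * r := by linarith [log_two_gt_d9]
  have hTV : 0 ≤ TV (Pexp μ φ f) (Pexp μ φ g) := Real.iSup_nonneg fun _ => abs_nonneg _
  have hL1 : Integrable (fun x => |expDensity μ φ f x - expDensity μ φ g x|) μ :=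
    (integrable_expDensity hk (hmeas f)).sub (integrable_expDensity hk (hmeas g)) |>.abs
  set c := logPartition μ φ f - logPartition μ φ g
  rw [div_mul_eq_mul_div, div_le_iff₀ (by positivity)]
  calc ‖f - g‖ * xiH φ μ ≤ 2 * ∫ x, |evalH φ (f - g) x - c| ∂μ :=
        norm_mul_xiH_le_two_mul_integral_abs_sub hk (hmeas _) c
    _ ≤ 2 * (exp (2 * r) * ∫ x, |expDensity μ φ f x - expDensity μ φ g x| ∂μ) := by
        rw [← integral_const_mul (exp (2 * r))]
        gcongr 2 * ?_
        exact integral_mono_of_nonneg (ae_of_all _ fun _ => abs_nonneg _) (hL1.const_mul _)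
          (ae_of_all _ (abs_evalH_sub_sub_le_exp_mul_abs_expDensity_sub hk (hmeas f) (hmeas g)
            hfr hgr))
    _ ≤ 2 * (exp (2 * r) * (2 * TV (Pexp μ φ f) (Pexp μ φ g))) := by
        gcongr
        exact integral_abs_expDensity_sub_le_two_mul_TV hk (hmeas f) (hmeas g)
    _ = 4 * exp (2 * r) * TV (Pexp μ φ f) (Pexp μ φ g) := by ring
    _ ≤ 32 * r * exp (2 * r) * TV (Pexp μ φ f) (Pexp μ φ g) :=
        mul_le_mul_of_nonneg_right (mul_le_mul_of_nonneg_right hr4 (exp_pos _).le) hTV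
    _ = TV (Pexp μ φ f) (Pexp μ φ g) * (32 * r * exp (2 * r)) := by ring

/-- lower bound on the TV distance between members of the kernel
exponential family in terms of the RKHS norm of the parameters and `ξ(H)`, for a
bounded kernel `k(x,x) ≤ 1` and a probability base measure `μ`. -/
theorem tv_lower_bound_rkhs_norm {X : Type*} [MeasurableSpace X]
    {H : Type*} [NormedAddCommGroup H] [InnerProductSpace ℝ H]
    (φ : X → H) (hmeas : ∀ h : H, Measurable (evalH φ h))
    (hk : ∀ x, (inner ℝ (φ x) (φ x) : ℝ) ≤ 1)
    (μ : Measure X) [IsProbabilityMeasure μ]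
    (r : ℝ) (hr : Real.log 2 / 4 ≤ r)
    (f g : H) (hfr : ‖f‖ ≤ r) (hgr : ‖g‖ ≤ r)
    (hf : Integrable (fun x => Real.exp (evalH φ f x)) μ)
    (hg : Integrable (fun x => Real.exp (evalH φ g x)) μ) :
    ‖f - g‖ / (32 * r * Real.exp (2 * r)) * xiH φ μ ≤
      TV (Pexp μ φ f) (Pexp μ φ g) :=
  tv_lower_bound_rkhs_norm_general φ hmeas hk μ r hr f g hfr hgr
end
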